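/- Let f₁, f₂, f₃, f₄ ∈ Δ_{2,max} be four times continuously differentiable on [−1,1] and satisfy: f₁ ≡ 1 near x = 1 and f₁ ≡ 0 near x = −1; f₂ ≡ 0 near x = 1 and f₂ ≡ 1 near x = −1; f₃(x) = x near x = 1 and f₃ ≡ 0 near x = −1; f₄ ≡ 0 near x = 1 and f₄(x) = x near x = −1. Then f₁, f₂, f₃, f₄ are linearly independent modulo Δ_{2,min}: if α₁, α₂, α₃, α₄ ∈ ℂ and α₁f₁ + α₂f₂ + α₃f₃ + α₄f₄ ∈ Δ_{2,min}, then α₁ = α₂ = α₃ = α₄ = 0. -/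

import Mathlib

open MeasureTheory Set Filter

noncomputable section

/-- `f` is locally absolutely continuous on `(-1,1)` with a.e. derivative `f'`,
expressed via the fundamental theorem of calculus. -/
def LocACOn (f f' : ℝ → ℂ) : Prop :=
  ∀ x ∈ Ioo (-1:ℝ) 1, ∀ y ∈ Ioo (-1:ℝ) 1,
    IntervalIntegrable f' volume x y ∧ f y - f x = ∫ t in x..y, f' t

/-- membership in `L²(-1,1)` -/
def L2I (g : ℝ → ℂ) : Prop :=
  MemLp g 2 (volume.restrict (Ioo (-1:ℝ) 1))

/-- the Legendre expression `ℓ[f] = -((1-x²)f′)′ = -(1-x²)f″ + 2x f′`. -/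
def leg (f1 f2 : ℝ → ℂ) (x : ℝ) : ℂ :=
  ((2*x : ℝ) : ℂ) * f1 x - ((1 - x^2 : ℝ) : ℂ) * f2 x

/-- the derivative `(ℓ[f])′ = 2f′ + 4x f″ - (1-x²)f‴`. -/
def legD (f1 f2 f3 : ℝ → ℂ) (x : ℝ) : ℂ :=
  (2 : ℂ) * f1 x + ((4*x : ℝ) : ℂ) * f2 x - ((1 - x^2 : ℝ) : ℂ) * f3 x

/-- the second derivative `(ℓ[f])″ = 6f″ + 6x f‴ - (1-x²)f⁗`. -/
def legDD (f2 f3 f4 : ℝ → ℂ) (x : ℝ) : ℂ :=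
  (6 : ℂ) * f2 x + ((6*x : ℝ) : ℂ) * f3 x - ((1 - x^2 : ℝ) : ℂ) * f4 x

/-- `ℓ²[f] = ((1-x²)²f″)″ - 2((1-x²)f′)′
           = (1-x²)²f⁗ - 8x(1-x²)f‴ + (14x²-6)f″ + 4x f′`. -/
def legSq (f1 f2 f3 f4 : ℝ → ℂ) (x : ℝ) : ℂ :=
  (((1 - x^2)^2 : ℝ) : ℂ) * f4 x - ((8*x*(1 - x^2) : ℝ) : ℂ) * f3 x
    + ((14*x^2 - 6 : ℝ) : ℂ) * f2 x + ((4*x : ℝ) : ℂ) * f1 x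

/-- `((1-x²)²f″)′ = (1-x²)²f‴ - 4x(1-x²)f″`. -/
def sqTermD (f2 f3 : ℝ → ℂ) (x : ℝ) : ℂ :=
  (((1 - x^2)^2 : ℝ) : ℂ) * f3 x - ((4*x*(1 - x^2) : ℝ) : ℂ) * f2 x

/-- `[f,1]₂(x) = ((1-x²)²f″)′ - 2(1-x²)f′`. -/
def bket1 (f1 f2 f3 : ℝ → ℂ) (x : ℝ) : ℂ :=
  sqTermD f2 f3 x - ((2*(1 - x^2) : ℝ) : ℂ) * f1 x

/-- `[f,x]₂(x) = x[f,1]₂(x) - (1-x²)²f″ + 2(1-x²)f`. -/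
def bketX (f f1 f2 f3 : ℝ → ℂ) (x : ℝ) : ℂ :=
  (x : ℂ) * bket1 f1 f2 f3 x - (((1 - x^2)^2 : ℝ) : ℂ) * f2 x
    + ((2*(1 - x^2) : ℝ) : ℂ) * f x

/-- the maximal domain `Δ_{2,max}` of `ℓ²` in `L²(-1,1)`:
`f, f′, f″, f‴` locally absolutely continuous and `f, ℓ²[f] ∈ L²(-1,1)`. -/
def Delta2Max (f f1 f2 f3 f4 : ℝ → ℂ) : Prop :=
  LocACOn f f1 ∧ LocACOn f1 f2 ∧ LocACOn f2 f3 ∧ LocACOn f3 f4 ∧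
    L2I f ∧ L2I (legSq f1 f2 f3 f4)

/-- the filter `x → 1⁻` from within `(-1,1)`. -/
def atOne : Filter ℝ := nhdsWithin 1 (Ioo (-1:ℝ) 1)

/-- the filter `x → -1⁺` from within `(-1,1)`. -/
def atNegOne : Filter ℝ := nhdsWithin (-1) (Ioo (-1:ℝ) 1)

/-- the GKN domain `D(S)`. -/
def DS (f f1 f2 f3 f4 : ℝ → ℂ) : Prop :=
  Delta2Max f f1 f2 f3 f4 ∧
  Tendsto (bket1 f1 f2 f3) atOne (nhds 0) ∧
  Tendsto (bket1 f1 f2 f3) atNegOne (nhds 0) ∧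
  Tendsto (bketX f f1 f2 f3) atOne (nhds 0) ∧
  Tendsto (bketX f f1 f2 f3) atNegOne (nhds 0)

/-- the maximal domain `Δ_{1,max}` of `ℓ` in `L²(-1,1)`. -/
def Delta1Max (f f1 f2 : ℝ → ℂ) : Prop :=
  LocACOn f f1 ∧ LocACOn f1 f2 ∧ L2I f ∧ L2I (leg f1 f2)

/-- the domain `D(A)` of the Legendre polynomials operator. -/
def DA (f f1 f2 : ℝ → ℂ) : Prop :=
  Delta1Max f f1 f2 ∧
  Tendsto (fun x => ((1 - x^2 : ℝ) : ℂ) * f1 x) atOne (nhds 0) ∧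
  Tendsto (fun x => ((1 - x^2 : ℝ) : ℂ) * f1 x) atNegOne (nhds 0)

/-- the algebraic domain `D(A²) = {f ∈ D(A) : ℓ[f] ∈ D(A)}`. -/
def DA2 (f f1 f2 f3 f4 : ℝ → ℂ) : Prop :=
  DA f f1 f2 ∧ DA (leg f1 f2) (legD f1 f2 f3) (legDD f2 f3 f4)

/-- the full sesquilinear form `[f,g]₂(x)` associated with `ℓ²` via Green's formula:
`[f,g]₂ = ((1-x²)²f″)′ ḡ − ((1-x²)²ḡ″)′ f − (1-x²)²f″ḡ′ + (1-x²)²f′ḡ″ − 2(1-x²)f′ḡ + 2(1-x²)fḡ′`. -/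
def bket2 (f f1 f2 f3 g g1 g2 g3 : ℝ → ℂ) (x : ℝ) : ℂ :=
  sqTermD f2 f3 x * star (g x) - star (sqTermD g2 g3 x) * f x
    - (((1 - x^2)^2 : ℝ) : ℂ) * f2 x * star (g1 x)
    + (((1 - x^2)^2 : ℝ) : ℂ) * f1 x * star (g2 x)
    - ((2*(1 - x^2) : ℝ) : ℂ) * f1 x * star (g x)
    + ((2*(1 - x^2) : ℝ) : ℂ) * f x * star (g1 x)

/-- the minimal domain `Δ_{2,min}`: those `f ∈ Δ_{2,max}` with
`[f,g]₂ |_{-1}^{1} = 0` for every `g ∈ Δ_{2,max}` (the two endpoint limits,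
which always exist, agree). -/
def Delta2Min (f f1 f2 f3 f4 : ℝ → ℂ) : Prop :=
  Delta2Max f f1 f2 f3 f4 ∧
  ∀ g g1 g2 g3 g4 : ℝ → ℂ, Delta2Max g g1 g2 g3 g4 →
    ∃ L : ℂ, Tendsto (bket2 f f1 f2 f3 g g1 g2 g3) atOne (nhds L) ∧
      Tendsto (bket2 f f1 f2 f3 g g1 g2 g3) atNegOne (nhds L)

/-!
Near `x = 1` the combination `F = α₁f₁ + ⋯ + α₄f₄` equals `α₁ + α₃x`, so `F″ = F‴ = 0` there and
`[F, g]₂` only involves `g` and its derivatives. Test against `g = log (1 - x)`, for which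
`ℓ²[g] = 0`, and against `g = (1 - x) log (1 - x)`: both lie in `Δ_{2,max}` and are smooth at `-1`,
and the limits of `[F, g]₂` are `-4α₃`, resp. `4(α₁ + α₃)`, at `1` and `0` at `-1`. As
`F ∈ Δ_{2,min}` these limits agree, whence `α₁ = α₃ = 0`. The reflection `x ↦ -x` preserves
`Δ_{2,max}` and `Δ_{2,min}`, because it only changes the sign of `[·,·]₂`, and it exchanges the two
endpoints; this gives `α₂ = α₄ = 0`.
-/

open scoped Topology

lemma LocACOn.continuousOn {f f' : ℝ → ℂ} (h : LocACOn f f') :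
    ContinuousOn f (Ioo (-1:ℝ) 1) := by
  intro c hc
  obtain ⟨a, ha, hac⟩ := exists_between hc.1
  obtain ⟨b, hcb, hb⟩ := exists_between hc.2
  have haI : a ∈ Ioo (-1:ℝ) 1 := ⟨ha, hac.trans hc.2⟩
  have hsub : uIcc a b ⊆ Ioo (-1:ℝ) 1 :=
    ordConnected_Ioo.uIcc_subset haI ⟨hc.1.trans hcb, hb⟩
  have hprim : ContinuousOn (fun y => f a + ∫ t in a..y, f' t) (uIcc a b) :=
    continuousOn_const.add (intervalIntegral.continuousOn_primitive_interval'
      (h a haI b (hsub right_mem_uIcc)).1 left_mem_uIcc)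
  have heq : EqOn (fun y => f a + ∫ t in a..y, f' t) f (uIcc a b) := fun y hy => by
    simp only [← (h a haI y (hsub hy)).2, add_sub_cancel]
  refine ((hprim.congr heq.symm).continuousAt ?_).continuousWithinAt
  rw [uIcc_of_le (hac.trans hcb).le]
  exact Icc_mem_nhds hac hcb

lemma LocACOn.hasDerivAt {f f' : ℝ → ℂ} (h : LocACOn f f')
    (hc : ContinuousOn f' (Ioo (-1:ℝ) 1)) {x : ℝ} (hx : x ∈ Ioo (-1:ℝ) 1) :
    HasDerivAt f (f' x) x := by
  have hprim : HasDerivAt (fun y => f x + ∫ t in x..y, f' t) (f' x) x :=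
    (intervalIntegral.integral_hasDerivAt_right (h x hx x hx).1
      (hc.stronglyMeasurableAtFilter isOpen_Ioo x hx)
      (hc.continuousAt (isOpen_Ioo.mem_nhds hx))).const_add _
  refine hprim.congr_of_eventuallyEq ?_
  filter_upwards [isOpen_Ioo.mem_nhds hx] with y hy
  rw [← (h x hx y hy).2, add_sub_cancel]

lemma LocACOn.eventually_eq_of_affine {f f' : ℝ → ℂ} (h : LocACOn f f')
    (hc : ContinuousOn f' (Ioo (-1:ℝ) 1)) {c : ℝ} {A B : ℂ}
    (hf : ∀ᶠ x in 𝓝[Ioo (-1:ℝ) 1] c, f x = A + B * x) :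
    ∀ᶠ x in 𝓝[Ioo (-1:ℝ) 1] c, f' x = B := by
  filter_upwards [eventually_eventually_nhdsWithin.2 hf, self_mem_nhdsWithin] with x hx hxI
  rw [isOpen_Ioo.nhdsWithin_eq hxI] at hx
  have haff : HasDerivAt (fun y : ℝ => A + B * y) B x := by
    simpa using ((hasDerivAt_id x).ofReal_comp.const_mul B).const_add A
  exact (h.hasDerivAt hc hxI).unique (haff.congr_of_eventuallyEq hx)

-- If `f` is the `k`-th derivative of `g`, then `reflect k f` is that of `x ↦ g (-x)`.
def reflect (k : ℕ) (f : ℝ → ℂ) (x : ℝ) : ℂ := (-1) ^ k * f (-x)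

lemma LocACOn.comp_neg {f f' : ℝ → ℂ} (h : LocACOn f f') (k : ℕ) :
    LocACOn (reflect k f) (reflect (k + 1) f') := by
  intro x hx y hy
  have hneg : ∀ {z : ℝ}, z ∈ Ioo (-1:ℝ) 1 → -z ∈ Ioo (-1:ℝ) 1 := fun hz =>
    ⟨by linarith [hz.2], by linarith [hz.1]⟩
  obtain ⟨hint, heq⟩ := h (-x) (hneg hx) (-y) (hneg hy)
  refine ⟨?_, ?_⟩
  · have := ((IntervalIntegrable.iff_comp_neg).mp hint).const_mul ((-1 : ℂ) ^ (k + 1))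
    rwa [neg_neg, neg_neg] at this
  · simp only [reflect, intervalIntegral.integral_const_mul, intervalIntegral.integral_comp_neg]
    rw [intervalIntegral.integral_symm, ← heq]
    ring

lemma L2I.comp_neg {f : ℝ → ℂ} (h : L2I f) (k : ℕ) : L2I (reflect k f) := by
  have hpres : MeasurePreserving Neg.neg (volume.restrict (Ioo (-1:ℝ) 1))
      (volume.restrict (Ioo (-1:ℝ) 1)) := by
    simpa using (Measure.measurePreserving_neg (volume : Measure ℝ)).restrict_preimage
      (measurableSet_Ioo (a := (-1:ℝ)) (b := 1))
  exact (h.comp_measurePreserving hpres).const_mul _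

lemma legSq_reflect (f1 f2 f3 f4 : ℝ → ℂ) :
    legSq (reflect 1 f1) (reflect 2 f2) (reflect 3 f3) (reflect 4 f4) =
      reflect 0 (legSq f1 f2 f3 f4) := by
  funext x
  simp only [legSq, reflect]
  push_cast
  ring

lemma Delta2Max.comp_neg {f f1 f2 f3 f4 : ℝ → ℂ} (h : Delta2Max f f1 f2 f3 f4) :
    Delta2Max (reflect 0 f) (reflect 1 f1) (reflect 2 f2) (reflect 3 f3) (reflect 4 f4) := by
  obtain ⟨h01, h12, h23, h34, hf, hsq⟩ := h
  refine ⟨h01.comp_neg 0, h12.comp_neg 1, h23.comp_neg 2, h34.comp_neg 3, hf.comp_neg 0, ?_⟩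
  rw [legSq_reflect]
  exact hsq.comp_neg 0

lemma bket2_reflect (f f1 f2 f3 g g1 g2 g3 : ℝ → ℂ) (x : ℝ) :
    bket2 (reflect 0 f) (reflect 1 f1) (reflect 2 f2) (reflect 3 f3) g g1 g2 g3 x =
      -bket2 f f1 f2 f3 (reflect 0 g) (reflect 1 g1) (reflect 2 g2) (reflect 3 g3) (-x) := by
  simp only [bket2, sqTermD, reflect, neg_neg, Complex.star_def, map_sub, map_mul, map_neg,
    map_pow, map_one, Complex.conj_ofReal]
  push_cast
  ring

lemma tendsto_neg_nhdsWithin_Ioo (c : ℝ) :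
    Tendsto Neg.neg (𝓝[Ioo (-1:ℝ) 1] c) (𝓝[Ioo (-1:ℝ) 1] (-c)) :=
  continuous_neg.continuousWithinAt.tendsto_nhdsWithin fun x hx =>
    ⟨by linarith [hx.2], by linarith [hx.1]⟩

lemma tendsto_neg_atOne : Tendsto Neg.neg atOne atNegOne := tendsto_neg_nhdsWithin_Ioo 1

lemma tendsto_neg_atNegOne : Tendsto Neg.neg atNegOne atOne := by
  have := tendsto_neg_nhdsWithin_Ioo (-1)
  rwa [neg_neg] at this

lemma Delta2Min.comp_neg {f f1 f2 f3 f4 : ℝ → ℂ} (h : Delta2Min f f1 f2 f3 f4) :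
    Delta2Min (reflect 0 f) (reflect 1 f1) (reflect 2 f2) (reflect 3 f3) (reflect 4 f4) := by
  refine ⟨h.1.comp_neg, fun g g1 g2 g3 g4 hg => ?_⟩
  obtain ⟨L, h1, hm⟩ := h.2 _ _ _ _ _ hg.comp_neg
  have hrefl : bket2 (reflect 0 f) (reflect 1 f1) (reflect 2 f2) (reflect 3 f3) g g1 g2 g3 =
      fun x => -bket2 f f1 f2 f3 (reflect 0 g) (reflect 1 g1) (reflect 2 g2) (reflect 3 g3) (-x) :=
    funext (bket2_reflect _ _ _ _ _ _ _ _)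
  rw [hrefl]
  exact ⟨-L, (hm.comp tendsto_neg_atOne).neg, (h1.comp tendsto_neg_atNegOne).neg⟩

def EventuallyAffine (l : Filter ℝ) (f f1 f2 f3 : ℝ → ℂ) (A B : ℂ) : Prop :=
  ∀ᶠ x in l, f x = A + B * x ∧ f1 x = B ∧ f2 x = 0 ∧ f3 x = 0

lemma Delta2Max.eventuallyAffine {f f1 f2 f3 f4 : ℝ → ℂ} (h : Delta2Max f f1 f2 f3 f4)
    {c : ℝ} {A B : ℂ} (hf : ∀ᶠ x in 𝓝[Ioo (-1:ℝ) 1] c, f x = A + B * x) :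
    EventuallyAffine (𝓝[Ioo (-1:ℝ) 1] c) f f1 f2 f3 A B := by
  obtain ⟨h01, h12, h23, h34, -, -⟩ := h
  have hf1 := h01.eventually_eq_of_affine h12.continuousOn hf
  have hf2 := h12.eventually_eq_of_affine h23.continuousOn
    (hf1.mono fun x hx => by rw [hx, zero_mul, add_zero])
  have hf3 := h23.eventually_eq_of_affine h34.continuousOn
    (hf2.mono fun x hx => by rw [hx, zero_mul, add_zero])
  filter_upwards [hf, hf1, hf2, hf3] with x h0 h1 h2 h3 using ⟨h0, h1, h2, h3⟩

lemma EventuallyAffine.comp_neg {l l' : Filter ℝ} {f f1 f2 f3 : ℝ → ℂ} {A B : ℂ}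
    (h : EventuallyAffine l f f1 f2 f3 A B) (hl : Tendsto Neg.neg l' l) :
    EventuallyAffine l' (reflect 0 f) (reflect 1 f1) (reflect 2 f2) (reflect 3 f3) A (-B) := by
  filter_upwards [hl.eventually h] with x ⟨h0, h1, h2, h3⟩
  simp only [reflect, h0, h1, h2, h3]
  push_cast
  refine ⟨?_, ?_, ?_, ?_⟩ <;> ring

lemma eventually_atOne_of_Ioo {P : ℝ → Prop}
    (h : ∃ ε > (0:ℝ), ∀ x ∈ Ioo (1 - ε) 1, P x) :
    ∀ᶠ x in atOne, P x := by
  obtain ⟨ε, hε, hP⟩ := h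
  have hmem : Ioo (1 - ε) 1 ∈ atOne :=
    nhdsWithin_mono (1:ℝ) Ioo_subset_Iio_self (Ioo_mem_nhdsLT (by linarith))
  exact Filter.mem_of_superset hmem hP

lemma eventually_atNegOne_of_Ioo {P : ℝ → Prop}
    (h : ∃ ε > (0:ℝ), ∀ x ∈ Ioo (-1) (-1 + ε), P x) :
    ∀ᶠ x in atNegOne, P x := by
  obtain ⟨ε, hε, hP⟩ := h
  have hmem : Ioo (-1) (-1 + ε) ∈ atNegOne :=
    nhdsWithin_mono (-1:ℝ) Ioo_subset_Ioi_self (Ioo_mem_nhdsGT (by linarith))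
  exact Filter.mem_of_superset hmem hP

lemma Delta2Min.eq_of_tendsto {f f1 f2 f3 f4 g g1 g2 g3 g4 : ℝ → ℂ} {a b : ℂ}
    (hf : Delta2Min f f1 f2 f3 f4) (hg : Delta2Max g g1 g2 g3 g4)
    (h1 : Tendsto (bket2 f f1 f2 f3 g g1 g2 g3) atOne (𝓝 a))
    (hm : Tendsto (bket2 f f1 f2 f3 g g1 g2 g3) atNegOne (𝓝 b)) : a = b := by
  have : atOne.NeBot := right_nhdsWithin_Ioo_neBot (by norm_num)
  have : atNegOne.NeBot := left_nhdsWithin_Ioo_neBot (by norm_num)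
  obtain ⟨L, h1', hm'⟩ := hf.2 g g1 g2 g3 g4 hg
  rw [tendsto_nhds_unique h1 h1', tendsto_nhds_unique hm hm']

def logOneSub (x : ℝ) : ℂ := (Real.log (1 - x) : ℝ)
def logOneSub' (x : ℝ) : ℂ := (-(1 - x)⁻¹ : ℝ)
def logOneSub'' (x : ℝ) : ℂ := (-(1 - x)⁻¹ ^ 2 : ℝ)
def logOneSub''' (x : ℝ) : ℂ := (-2 * (1 - x)⁻¹ ^ 3 : ℝ)
def logOneSub'''' (x : ℝ) : ℂ := (-6 * (1 - x)⁻¹ ^ 4 : ℝ)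

def mulLogOneSub (x : ℝ) : ℂ := ((1 - x) * Real.log (1 - x) : ℝ)
def mulLogOneSub' (x : ℝ) : ℂ := (-Real.log (1 - x) - 1 : ℝ)
def mulLogOneSub'' (x : ℝ) : ℂ := ((1 - x)⁻¹ : ℝ)
def mulLogOneSub''' (x : ℝ) : ℂ := ((1 - x)⁻¹ ^ 2 : ℝ)
def mulLogOneSub'''' (x : ℝ) : ℂ := (2 * (1 - x)⁻¹ ^ 3 : ℝ)

lemma hasDerivAt_inv_one_sub {x : ℝ} (hx : x ≠ 1) :
    HasDerivAt (fun y => (1 - y)⁻¹) ((1 - x)⁻¹ ^ 2) x := by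
  refine (((hasDerivAt_id' x).const_sub 1).fun_inv (sub_ne_zero.2 hx.symm)).congr_deriv ?_
  rw [inv_pow, neg_neg, one_div]

lemma hasDerivAt_inv_one_sub_pow (n : ℕ) {x : ℝ} (hx : x ≠ 1) :
    HasDerivAt (fun y => (1 - y)⁻¹ ^ n) (n * (1 - x)⁻¹ ^ (n + 1)) x := by
  refine ((hasDerivAt_inv_one_sub hx).fun_pow n).congr_deriv ?_
  rcases n with _ | n
  · simp
  · rw [Nat.add_sub_cancel]; ring

lemma hasDerivAt_log_one_sub {x : ℝ} (hx : x ≠ 1) :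
    HasDerivAt (fun y => Real.log (1 - y)) (-(1 - x)⁻¹) x := by
  refine (((hasDerivAt_id' x).const_sub 1).log (sub_ne_zero.2 hx.symm)).congr_deriv ?_
  rw [neg_div, one_div]

lemma continuousOn_const_mul_inv_one_sub_pow (c : ℝ) (n : ℕ) :
    ContinuousOn (fun x => c * (1 - x)⁻¹ ^ n) (Ioo (-1:ℝ) 1) :=
  continuousOn_const.mul <| ((continuous_const.sub continuous_id).continuousOn.inv₀
    fun _ hx => sub_ne_zero.2 (ne_of_gt hx.2)).pow n

@[fun_prop]
lemma continuous_mulLogOneSub : Continuous mulLogOneSub :=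
  Complex.continuous_ofReal.comp (Real.continuous_mul_log.comp (continuous_const.sub continuous_id))

lemma locACOn_ofReal {g g' : ℝ → ℝ} (hd : ∀ x ∈ Ioo (-1:ℝ) 1, HasDerivAt g (g' x) x)
    (hc : ContinuousOn g' (Ioo (-1:ℝ) 1)) :
    LocACOn (fun x => (g x : ℂ)) (fun x => (g' x : ℂ)) := by
  intro x hx y hy
  have hsub := ordConnected_Ioo.uIcc_subset hx hy
  have hint : IntervalIntegrable (fun x => (g' x : ℂ)) volume x y :=
    ((Complex.continuous_ofReal.comp_continuousOn hc).mono hsub).intervalIntegrable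
  exact ⟨hint, (intervalIntegral.integral_eq_sub_of_hasDerivAt
    (fun t ht => (hd t (hsub ht)).ofReal_comp) hint).symm⟩

lemma log_sq_le {t : ℝ} (ht : 0 < t) (ht2 : t ≤ 2) :
    Real.log t ^ 2 ≤ 16 * t ^ (-(1/2) : ℝ) + 1 := by
  rcases le_or_gt t 1 with h1 | h1
  · have hbound : |Real.log t * t ^ (1/4 : ℝ)| < 4 := by
      simpa using Real.abs_log_mul_self_rpow_lt t (1/4) ht h1 (by norm_num)
    have hpow : t ^ (-(1/2) : ℝ) = ((t ^ (1/4 : ℝ)) ^ 2)⁻¹ := by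
      rw [← Real.rpow_natCast, ← Real.rpow_mul ht.le, ← Real.rpow_neg ht.le]
      norm_num
    have hprod : Real.log t ^ 2 * (t ^ (1/4 : ℝ)) ^ 2 ≤ 16 := by
      rw [← mul_pow, ← sq_abs]
      nlinarith [abs_nonneg (Real.log t * t ^ (1/4 : ℝ))]
    have hs : 0 < (t ^ (1/4 : ℝ)) ^ 2 := by positivity
    rw [hpow, ← div_eq_mul_inv]
    linarith [(le_div_iff₀ hs).2 hprod]
  · have h0 : 0 ≤ Real.log t := Real.log_nonneg h1.le
    have h1' : Real.log t ≤ 1 := by linarith [Real.log_le_sub_one_of_pos ht]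
    nlinarith [Real.rpow_nonneg ht.le (-(1/2) : ℝ)]

lemma l2I_logOneSub : L2I logOneSub := by
  have hcont : ContinuousOn logOneSub (Ioo (-1:ℝ) 1) := fun x hx =>
    (hasDerivAt_log_one_sub (ne_of_lt hx.2)).ofReal_comp.continuousAt.continuousWithinAt
  have hmeas := hcont.aestronglyMeasurable (μ := volume) measurableSet_Ioo
  rw [L2I, memLp_two_iff_integrable_sq_norm hmeas]
  have hdom : IntegrableOn (fun x : ℝ => 16 * (1 - x) ^ (-(1/2) : ℝ) + 1) (Ioo (-1) 1) := by
    have hrpow := (intervalIntegral.intervalIntegrable_rpow' (r := -(1/2)) (a := 0) (b := 2)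
      (by norm_num)).comp_sub_left 1
    norm_num at hrpow
    rw [← intervalIntegrable_iff_integrableOn_Ioo_of_le (by norm_num)]
    exact (hrpow.symm.const_mul 16).add intervalIntegrable_const
  refine hdom.mono' (hmeas.norm.pow 2) ?_
  rw [ae_restrict_iff' measurableSet_Ioo]
  filter_upwards with x hx
  simp only [logOneSub, Complex.norm_real, Real.norm_eq_abs, sq_abs, norm_pow]
  exact log_sq_le (by linarith [hx.2]) (by linarith [hx.1])

lemma l2I_of_continuous {g : ℝ → ℂ} (hg : Continuous g) : L2I g := by
  have : IsFiniteMeasure (volume.restrict (Ioo (-1:ℝ) 1)) := isFiniteMeasure_restrict.2 (by simp)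
  obtain ⟨C, hC⟩ := (isCompact_Icc (a := (-1:ℝ)) (b := 1)).exists_bound_of_continuousOn
    hg.continuousOn
  refine MemLp.of_bound hg.aestronglyMeasurable C ?_
  rw [ae_restrict_iff' measurableSet_Ioo]
  exact Eventually.of_forall fun x hx => hC x (Ioo_subset_Icc_self hx)

lemma L2I.congr_eqOn {f g : ℝ → ℂ} (hg : L2I g) (h : EqOn f g (Ioo (-1:ℝ) 1)) : L2I f :=
  (memLp_congr_ae ((ae_restrict_iff' measurableSet_Ioo).2 (Eventually.of_forall h))).2 hg

lemma legSq_logOneSub {x : ℝ} (hx : x < 1) :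
    legSq logOneSub' logOneSub'' logOneSub''' logOneSub'''' x = 0 := by
  have hne : (1 - x : ℂ) ≠ 0 := by exact_mod_cast (sub_pos.2 hx).ne'
  simp only [legSq, logOneSub', logOneSub'', logOneSub''', logOneSub'''']
  push_cast
  field_simp
  ring

lemma legSq_mulLogOneSub {x : ℝ} (hx : x < 1) :
    legSq mulLogOneSub' mulLogOneSub'' mulLogOneSub''' mulLogOneSub'''' x =
      -4 - 12 * x + 4 * mulLogOneSub x - 4 * logOneSub x := by
  have hne : (1 - x : ℂ) ≠ 0 := by exact_mod_cast (sub_pos.2 hx).ne'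
  simp only [legSq, mulLogOneSub, mulLogOneSub', mulLogOneSub'', mulLogOneSub''', mulLogOneSub'''',
    logOneSub]
  push_cast
  field_simp
  ring

lemma delta2Max_logOneSub :
    Delta2Max logOneSub logOneSub' logOneSub'' logOneSub''' logOneSub'''' := by
  refine ⟨?_, ?_, ?_, ?_, l2I_logOneSub, ?_⟩
  · exact locACOn_ofReal (fun x hx => hasDerivAt_log_one_sub (ne_of_lt hx.2))
      (by simpa using continuousOn_const_mul_inv_one_sub_pow (-1) 1)
  · exact locACOn_ofReal (fun x hx => (hasDerivAt_inv_one_sub (ne_of_lt hx.2)).neg)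
      (by simpa using continuousOn_const_mul_inv_one_sub_pow (-1) 2)
  · exact locACOn_ofReal
      (fun x hx => ((hasDerivAt_inv_one_sub_pow 2 (ne_of_lt hx.2)).neg).congr_deriv
        (by push_cast; ring))
      (continuousOn_const_mul_inv_one_sub_pow (-2) 3)
  · exact locACOn_ofReal
      (fun x hx => ((hasDerivAt_inv_one_sub_pow 3 (ne_of_lt hx.2)).const_mul (-2)).congr_deriv
        (by push_cast; ring))
      (continuousOn_const_mul_inv_one_sub_pow (-6) 4)
  · exact L2I.congr_eqOn (l2I_of_continuous continuous_const) fun x hx => legSq_logOneSub hx.2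

lemma delta2Max_mulLogOneSub :
    Delta2Max mulLogOneSub mulLogOneSub' mulLogOneSub'' mulLogOneSub''' mulLogOneSub'''' := by
  have hd1 : ∀ x ∈ Ioo (-1:ℝ) 1, HasDerivAt (fun y => -Real.log (1 - y) - 1) (1 - x)⁻¹ x :=
    fun x hx => ((hasDerivAt_log_one_sub (ne_of_lt hx.2)).neg.sub_const 1).congr_deriv (neg_neg _)
  refine ⟨?_, ?_, ?_, ?_, l2I_of_continuous continuous_mulLogOneSub, ?_⟩
  · refine locACOn_ofReal (fun x hx => ?_) fun x hx => (hd1 x hx).continuousAt.continuousWithinAt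
    have hne : 1 - x ≠ 0 := sub_ne_zero.2 (ne_of_gt hx.2)
    refine (((hasDerivAt_id' x).const_sub 1).mul
      (hasDerivAt_log_one_sub (ne_of_lt hx.2))).congr_deriv ?_
    field_simp
    ring
  · exact locACOn_ofReal hd1 (by simpa using continuousOn_const_mul_inv_one_sub_pow 1 1)
  · exact locACOn_ofReal (fun x hx => hasDerivAt_inv_one_sub (ne_of_lt hx.2))
      (by simpa using continuousOn_const_mul_inv_one_sub_pow 1 2)
  · exact locACOn_ofReal
      (fun x hx => (hasDerivAt_inv_one_sub_pow 2 (ne_of_lt hx.2)).congr_deriv (by push_cast; ring))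
      (continuousOn_const_mul_inv_one_sub_pow 2 3)
  · refine L2I.congr_eqOn (g := fun x => -4 - 12 * x + 4 * mulLogOneSub x - 4 * logOneSub x) ?_
      fun x hx => legSq_mulLogOneSub hx.2
    exact (l2I_of_continuous (by fun_prop)).sub (l2I_logOneSub.const_mul 4)

lemma bket2_logOneSub_of_affine {f f1 f2 f3 : ℝ → ℂ} {A B : ℂ} {x : ℝ} (hx : x < 1)
    (h : f x = A + B * x ∧ f1 x = B ∧ f2 x = 0 ∧ f3 x = 0) :
    bket2 f f1 f2 f3 logOneSub logOneSub' logOneSub'' logOneSub''' x =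
      -B * (1 + x) * (1 + x + 2 * mulLogOneSub x) := by
  obtain ⟨h0, h1, h2, h3⟩ := h
  have hne : (1 - x : ℂ) ≠ 0 := by exact_mod_cast (sub_pos.2 hx).ne'
  simp only [bket2, sqTermD, logOneSub, logOneSub', logOneSub'', logOneSub''', mulLogOneSub,
    h0, h1, h2, h3, Complex.star_def, map_sub, map_mul, Complex.conj_ofReal]
  push_cast
  field_simp
  ring

lemma bket2_mulLogOneSub_of_affine {f f1 f2 f3 : ℝ → ℂ} {A B : ℂ} {x : ℝ} (hx : x < 1)
    (h : f x = A + B * x ∧ f1 x = B ∧ f2 x = 0 ∧ f3 x = 0) :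
    bket2 f f1 f2 f3 mulLogOneSub mulLogOneSub' mulLogOneSub'' mulLogOneSub''' x =
      (1 + x) * (B * (1 - x ^ 2) - (A + B * x) * (3 - 5 * x) - 2 * (A + B) * mulLogOneSub x) := by
  obtain ⟨h0, h1, h2, h3⟩ := h
  have hne : (1 - x : ℂ) ≠ 0 := by exact_mod_cast (sub_pos.2 hx).ne'
  simp only [bket2, sqTermD, mulLogOneSub, mulLogOneSub', mulLogOneSub'', mulLogOneSub''',
    h0, h1, h2, h3, Complex.star_def, map_sub, map_mul, Complex.conj_ofReal]
  push_cast
  field_simp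
  ring

-- With `Real.log 0 = 0`, `mulLogOneSub` is continuous on all of `ℝ`, so the endpoint limits
-- below are plain evaluations.
lemma EventuallyAffine.tendsto_bket2_logOneSub {f f1 f2 f3 : ℝ → ℂ} {A B : ℂ} {c : ℝ}
    (h : EventuallyAffine (𝓝[Ioo (-1:ℝ) 1] c) f f1 f2 f3 A B) :
    Tendsto (bket2 f f1 f2 f3 logOneSub logOneSub' logOneSub'' logOneSub''')
      (𝓝[Ioo (-1:ℝ) 1] c)
      (𝓝 (-B * (1 + c) * (1 + c + 2 * mulLogOneSub c))) := by
  have hcont : Continuous fun x : ℝ => -B * (1 + x) * (1 + x + 2 * mulLogOneSub x) := by fun_prop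
  refine hcont.continuousWithinAt.tendsto.congr' ?_
  filter_upwards [h, self_mem_nhdsWithin] with x hx hxI
  exact (bket2_logOneSub_of_affine hxI.2 hx).symm

lemma EventuallyAffine.tendsto_bket2_mulLogOneSub {f f1 f2 f3 : ℝ → ℂ} {A B : ℂ} {c : ℝ}
    (h : EventuallyAffine (𝓝[Ioo (-1:ℝ) 1] c) f f1 f2 f3 A B) :
    Tendsto (bket2 f f1 f2 f3 mulLogOneSub mulLogOneSub' mulLogOneSub'' mulLogOneSub''')
      (𝓝[Ioo (-1:ℝ) 1] c)
      (𝓝 ((1 + c) *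
        (B * (1 - c ^ 2) - (A + B * c) * (3 - 5 * c) - 2 * (A + B) * mulLogOneSub c))) := by
  have hcont : Continuous fun x : ℝ =>
      (1 + x) * (B * (1 - x ^ 2) - (A + B * x) * (3 - 5 * x) - 2 * (A + B) * mulLogOneSub x) := by
    fun_prop
  refine hcont.continuousWithinAt.tendsto.congr' ?_
  filter_upwards [h, self_mem_nhdsWithin] with x hx hxI
  exact (bket2_mulLogOneSub_of_affine hxI.2 hx).symm

lemma Delta2Min.eq_zero_of_eventuallyAffine {f f1 f2 f3 f4 : ℝ → ℂ} {A B A' B' : ℂ}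
    (hf : Delta2Min f f1 f2 f3 f4) (h1 : EventuallyAffine atOne f f1 f2 f3 A B)
    (hm : EventuallyAffine atNegOne f f1 f2 f3 A' B') : A = 0 ∧ B = 0 := by
  have hlog := hf.eq_of_tendsto delta2Max_logOneSub h1.tendsto_bket2_logOneSub
    hm.tendsto_bket2_logOneSub
  have hmul := hf.eq_of_tendsto delta2Max_mulLogOneSub h1.tendsto_bket2_mulLogOneSub
    hm.tendsto_bket2_mulLogOneSub
  norm_num [mulLogOneSub] at hlog hmul
  exact ⟨by linear_combination hmul - hlog, hlog⟩

theorem BC_functions_linearly_independent_mod_minimal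
    (p p1 p2 p3 p4 q q1 q2 q3 q4 r r1 r2 r3 r4 s s1 s2 s3 s4 : ℝ → ℂ)
    (hp1 : ∃ ε > (0:ℝ), ∀ x ∈ Ioo (1 - ε) (1:ℝ), p x = 1)
    (hp2 : ∃ ε > (0:ℝ), ∀ x ∈ Ioo (-1:ℝ) (-1 + ε), p x = 0)
    (hq1 : ∃ ε > (0:ℝ), ∀ x ∈ Ioo (1 - ε) (1:ℝ), q x = 0)
    (hq2 : ∃ ε > (0:ℝ), ∀ x ∈ Ioo (-1:ℝ) (-1 + ε), q x = 1)
    (hr1 : ∃ ε > (0:ℝ), ∀ x ∈ Ioo (1 - ε) (1:ℝ), r x = (x : ℂ))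
    (hr2 : ∃ ε > (0:ℝ), ∀ x ∈ Ioo (-1:ℝ) (-1 + ε), r x = 0)
    (hs1 : ∃ ε > (0:ℝ), ∀ x ∈ Ioo (1 - ε) (1:ℝ), s x = 0)
    (hs2 : ∃ ε > (0:ℝ), ∀ x ∈ Ioo (-1:ℝ) (-1 + ε), s x = (x : ℂ))
    (α₁ α₂ α₃ α₄ : ℂ)
    (hmin : Delta2Min
      (fun x => α₁ * p x + α₂ * q x + α₃ * r x + α₄ * s x)
      (fun x => α₁ * p1 x + α₂ * q1 x + α₃ * r1 x + α₄ * s1 x)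
      (fun x => α₁ * p2 x + α₂ * q2 x + α₃ * r2 x + α₄ * s2 x)
      (fun x => α₁ * p3 x + α₂ * q3 x + α₃ * r3 x + α₄ * s3 x)
      (fun x => α₁ * p4 x + α₂ * q4 x + α₃ * r4 x + α₄ * s4 x)) :
    α₁ = 0 ∧ α₂ = 0 ∧ α₃ = 0 ∧ α₄ = 0 := by
  have hright := hmin.1.eventuallyAffine (c := 1) (A := α₁) (B := α₃) <| by
    filter_upwards [eventually_atOne_of_Ioo hp1, eventually_atOne_of_Ioo hq1,
      eventually_atOne_of_Ioo hr1, eventually_atOne_of_Ioo hs1] with x hpx hqx hrx hsx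
    rw [hpx, hqx, hrx, hsx]
    ring
  have hleft := hmin.1.eventuallyAffine (c := -1) (A := α₂) (B := α₄) <| by
    filter_upwards [eventually_atNegOne_of_Ioo hp2, eventually_atNegOne_of_Ioo hq2,
      eventually_atNegOne_of_Ioo hr2, eventually_atNegOne_of_Ioo hs2] with x hpx hqx hrx hsx
    rw [hpx, hqx, hrx, hsx]
    ring
  obtain ⟨h₁, h₃⟩ := hmin.eq_zero_of_eventuallyAffine hright hleft
  obtain ⟨h₂, h₄⟩ := hmin.comp_neg.eq_zero_of_eventuallyAffine
    (hleft.comp_neg tendsto_neg_atOne) (hright.comp_neg tendsto_neg_atNegOne)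
  exact ⟨h₁, h₂, h₃, neg_eq_zero.1 h₄⟩
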